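/- Let G be a subcubic graph with a feasible coloring f (a (1,1,2,2,3,3)-coloring with labeled classes 1_a,1_b,2_a,2_b,3_a,3_b), and let u be a vertex of degree 2 with neighbors u_1, u_2. If {f(u_1), f(u_2)} ≠ {1_a, 1_b}, then there is a feasible coloring g of G that agrees with f on all vertices except u and satisfies g(u) ∈ {1_a, 1_b}. -/

import Mathlib

open SimpleGraph

/-- The subdivision `D(G)` of a graph `G`: every edge is subdivided once. -/
def Subdivision {V : Type*} (G : SimpleGraph V) : SimpleGraph (V ⊕ G.edgeSet) where
  Adj x y := match x, y with
    | Sum.inl v, Sum.inr e => v ∈ (e : Sym2 V)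
    | Sum.inr e, Sum.inl v => v ∈ (e : Sym2 V)
    | _, _ => False
  symm := ⟨by rintro (v|e) (w|f) h <;> simp_all⟩
  loopless := ⟨by rintro (v|e) h <;> simp_all⟩

/-- `c` is an `S`-coloring of `G` where `s` gives the distance requirements:
two distinct vertices of color `i` must be at distance at least `s i + 1`. -/
def IsSColoring {V : Type*} {k : ℕ} (G : SimpleGraph V) (s : Fin k → ℕ) (c : V → Fin k) : Prop :=
  ∀ u v : V, u ≠ v → c u = c v → (↑(s (c u) + 1) : ℕ∞) ≤ G.edist u v

/-- `c` is a packing `k`-coloring of `G` with colors `1,…,k`. -/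
def IsPackingColoring {V : Type*} (G : SimpleGraph V) (k : ℕ) (c : V → ℕ) : Prop :=
  (∀ v, 1 ≤ c v ∧ c v ≤ k) ∧
  ∀ u v : V, u ≠ v → c u = c v → (↑(c u + 1) : ℕ∞) ≤ G.edist u v

/-- A graph is 2-degenerate: every (finite, induced) subgraph has a vertex of degree at most 2. -/
def TwoDegenerate {V : Type*} [DecidableEq V] (G : SimpleGraph V) [DecidableRel G.Adj] : Prop :=
  ∀ W : Finset V, W.Nonempty → ∃ v ∈ W, (W.filter (fun w => G.Adj v w)).card ≤ 2

theorem Set.exists_mem_notMem_of_pair_ne {α : Type*} {a b x y : α} (hxy : x ≠ y)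
    (h : ({a, b} : Set α) ≠ {x, y}) : ∃ c ∈ ({x, y} : Set α), c ∉ ({a, b} : Set α) := by
  by_contra! hsub
  apply h
  rw [Set.pair_eq_pair_iff]
  rcases hsub x (by simp) with rfl | rfl <;> rcases hsub y (by simp) with rfl | rfl <;> simp_all

theorem SimpleGraph.two_le_edist_of_ne_of_not_adj {V : Type*} {G : SimpleGraph V} {u v : V}
    (hne : u ≠ v) (hadj : ¬G.Adj u v) : 2 ≤ G.edist u v := by
  have hpos : 0 < G.edist u v := edist_pos_of_ne hne
  have hne1 : G.edist u v ≠ 1 := mt edist_eq_one_iff_adj.mp hadj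
  by_contra! hlt
  have hlt1 : G.edist u v < 1 := (Order.le_of_lt_add_one hlt).lt_of_ne hne1
  exact hpos.ne' (Order.lt_one_iff.mp hlt1)

namespace IsSColoring

variable {V : Type*} [DecidableEq V] {k : ℕ} {G : SimpleGraph V} {s : Fin k → ℕ} {c : V → Fin k}

theorem update (hc : IsSColoring G s c) (u : V) (i : Fin k)
    (hi : ∀ w, w ≠ u → c w = i → ((s i + 1 : ℕ) : ℕ∞) ≤ G.edist u w) :
    IsSColoring G s (Function.update c u i) := by
  intro v w hvw heq
  rcases eq_or_ne v u with rfl | hvu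
  · rw [Function.update_self, Function.update_of_ne hvw.symm] at heq
    rw [Function.update_self]
    exact hi w hvw.symm heq.symm
  rcases eq_or_ne w u with rfl | hwu
  · rw [Function.update_self, Function.update_of_ne hvu] at heq
    rw [Function.update_of_ne hvu, heq, edist_comm]
    exact hi v hvu heq
  · rw [Function.update_of_ne hvu, Function.update_of_ne hwu] at heq
    rw [Function.update_of_ne hvu]
    exact hc v w hvw heq

theorem update_of_forall_adj_ne (hc : IsSColoring G s c) (u : V) {i : Fin k}
    (hi : s i ≤ 1) (hadj : ∀ w, G.Adj u w → c w ≠ i) :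
    IsSColoring G s (Function.update c u i) :=
  hc.update u i fun w hwu hw => calc
    ((s i + 1 : ℕ) : ℕ∞) ≤ 2 := by exact_mod_cast Nat.add_le_add_right hi 1
    _ ≤ G.edist u w := two_le_edist_of_ne_of_not_adj hwu.symm fun h => hadj w h hw

end IsSColoring

theorem stmt10_general {V : Type*} (G : SimpleGraph V)
    (f : V → Fin 6) (hf : IsSColoring G ![1, 1, 2, 2, 3, 3] f)
    (u u1 u2 : V) (hNu : G.neighborSet u = {u1, u2})
    (hcol : ({f u1, f u2} : Set (Fin 6)) ≠ ({0, 1} : Set (Fin 6))) :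
    ∃ g : V → Fin 6, IsSColoring G ![1, 1, 2, 2, 3, 3] g ∧
      (∀ v : V, v ≠ u → g v = f v) ∧ g u ∈ ({0, 1} : Set (Fin 6)) := by
  classical
  obtain ⟨c, hc01, hc⟩ := Set.exists_mem_notMem_of_pair_ne (by decide) hcol
  have hnbr : ∀ w, G.Adj u w → f w ≠ c := by
    rintro w hw rfl
    apply hc
    rw [← Set.image_pair, ← hNu]
    exact Set.mem_image_of_mem f hw
  have hsc : (![1, 1, 2, 2, 3, 3] : Fin 6 → ℕ) c ≤ 1 := by
    rcases hc01 with rfl | rfl <;> decide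
  exact ⟨Function.update f u c, hf.update_of_forall_adj_ne u hsc hnbr,
    fun v hv => Function.update_of_ne hv _ _, by simpa using hc01⟩

/-- A feasible coloring: colors `0,1,2,3,4,5` stand for `1_a,1_b,2_a,2_b,3_a,3_b`,
with vertices of color `i_x` pairwise at distance at least `i+1`. -/
theorem stmt10 {V : Type*} [Fintype V] [DecidableEq V] (G : SimpleGraph V) [DecidableRel G.Adj]
    (hsubcubic : ∀ v, G.degree v ≤ 3)
    (f : V → Fin 6) (hf : IsSColoring G ![1, 1, 2, 2, 3, 3] f)
    (u u1 u2 : V) (hNu : G.neighborSet u = {u1, u2}) (h12 : u1 ≠ u2)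
    (hcol : ({f u1, f u2} : Set (Fin 6)) ≠ ({0, 1} : Set (Fin 6))) :
    ∃ g : V → Fin 6, IsSColoring G ![1, 1, 2, 2, 3, 3] g ∧
      (∀ v : V, v ≠ u → g v = f v) ∧ g u ∈ ({0, 1} : Set (Fin 6)) :=
  stmt10_general G f hf u u1 u2 hNu hcol
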